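/- arXiv:1609.03514 — 2 statements merged into one kernel-verified Lean document; each statement's English description precedes it below -/
import Mathlib

section
/- Let s ∈ (1/2, 1]. There exists a constant C such that for every 2π-periodic function f that is Hölder continuous of order s with norm ‖f‖_{Λ^s} = sup|f| + sup_{x,y≠0}|f(x-y)-f(x)|/|y|^s, one has ∑_{ξ∈ℤ} |f̂(ξ)| ≤ C‖f‖_{Λ^s}. -/
/-!
Bernstein's argument. Translating `f` by `h` multiplies its `n`-th Fourier coefficient by
`e^{-inh}`, so `g = f (· - h) - f` has coefficients `(e^{-inh} - 1) f̂ n`, while `‖g‖∞ ≤ B hˢ`.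
On the dyadic shell `2ᵏ ≤ |n| < 2ᵏ⁺¹` take `h = 2π / 2ᵏ⁺²`: then `|e^{-inh} - 1| ≥ 1` on the
shell, and Bessel's inequality for `g` together with Cauchy–Schwarz over the `2ᵏ⁺¹` frequencies
of the shell bound `∑_shell |f̂ n|` by a multiple of `B (√2 / 2ˢ)ᵏ`, a geometric series that
converges exactly when `s > 1/2`.
-/

noncomputable def fourierCoef (f : ℝ → ℂ) (ξ : ℤ) : ℂ :=
  (1 / (2 * Real.pi)) * ∫ x in (0:ℝ)..(2 * Real.pi), f x * Complex.exp (-(Complex.I * (ξ:ℂ) * (x:ℂ)))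

open Finset MeasureTheory Function
open Real hiding exp
open Complex (exp I)

noncomputable def dyadicShell (k : ℕ) : Finset ℤ :=
  Ioo (-2 ^ (k + 1)) (2 ^ (k + 1)) \ Ioo (-2 ^ k) (2 ^ k)

lemma Ioo_neg_two_pow_subset_succ (k : ℕ) :
    Ioo (-2 ^ k : ℤ) (2 ^ k) ⊆ Ioo (-2 ^ (k + 1)) (2 ^ (k + 1)) :=
  Ioo_subset_Ioo (by gcongr <;> omega) (by gcongr <;> omega)

lemma card_Ioo_neg_two_pow (k : ℕ) : (#(Ioo (-2 ^ k : ℤ) (2 ^ k)) : ℤ) = 2 ^ (k + 1) - 1 :=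
  (Int.card_Ioo_of_lt (-2 ^ k) (2 ^ k) (by linarith [pow_pos (two_pos (α := ℤ)) k])).trans
    (by ring)

lemma mem_dyadicShell {k : ℕ} {ξ : ℤ} :
    ξ ∈ dyadicShell k ↔ 2 ^ k ≤ |ξ| ∧ |ξ| < 2 ^ (k + 1) := by
  simp only [dyadicShell, mem_sdiff, mem_Ioo, ← abs_lt, not_lt]
  exact and_comm

lemma card_dyadicShell (k : ℕ) : #(dyadicShell k) = 2 ^ (k + 1) := by
  have hsub := Ioo_neg_two_pow_subset_succ k
  rw [dyadicShell, card_sdiff_of_subset hsub]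
  zify [card_le_card hsub]
  rw [card_Ioo_neg_two_pow, card_Ioo_neg_two_pow]
  ring

lemma tsum_le_of_sum_dyadicShell_le {a : ℤ → ℝ} (ha : 0 ≤ a) {c r : ℝ} (hc : 0 ≤ c)
    (hr₀ : 0 ≤ r) (hr₁ : r < 1) (hshell : ∀ k, ∑ ξ ∈ dyadicShell k, a ξ ≤ c * r ^ k) :
    ∑' ξ, a ξ ≤ a 0 + c / (1 - r) := by
  have hball (N : ℕ) : ∑ ξ ∈ Ioo (-2 ^ N) (2 ^ N), a ξ ≤ a 0 + c * ∑ k ∈ range N, r ^ k := by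
    induction N with
    | zero => simp [show Ioo (-1 : ℤ) 1 = {0} from rfl]
    | succ N ih =>
      have hshellN := hshell N
      rw [dyadicShell] at hshellN
      rw [← sum_sdiff (Ioo_neg_two_pow_subset_succ N), sum_range_succ, mul_add]
      linarith
  have hgeom (N : ℕ) : c * ∑ k ∈ range N, r ^ k ≤ c / (1 - r) := by
    rw [← mul_one_div]
    refine mul_le_mul_of_nonneg_left ?_ hc
    simpa using geom_sum_Ico_le_of_lt_one (m := 0) (n := N) hr₀ hr₁
  refine Real.tsum_le_of_sum_le ha fun u => ?_
  obtain ⟨N, hN⟩ : ∃ N : ℕ, u ⊆ Ioo (-2 ^ N) (2 ^ N) := by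
    refine ⟨u.sup Int.natAbs, fun ξ hξ => ?_⟩
    rw [mem_Ioo, ← abs_lt, Int.abs_eq_natAbs]
    exact_mod_cast (le_sup (f := Int.natAbs) hξ).trans_lt Nat.lt_two_pow_self
  calc ∑ ξ ∈ u, a ξ ≤ ∑ ξ ∈ Ioo (-2 ^ N) (2 ^ N), a ξ :=
        sum_le_sum_of_subset_of_nonneg hN fun ξ _ _ => ha ξ
    _ ≤ a 0 + c / (1 - r) := by linarith [hball N, hgeom N]

lemma fourierCoef_eq_fourierCoeffOn (f : ℝ → ℂ) (ξ : ℤ) :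
    fourierCoef f ξ = fourierCoeffOn two_pi_pos f ξ := by
  rw [fourierCoeffOn_eq_integral, fourierCoef, sub_zero, Complex.real_smul]
  push_cast
  congr 1
  refine intervalIntegral.integral_congr fun x _ => ?_
  rw [fourier_coe_apply, smul_eq_mul, mul_comm]
  congr 2
  field_simp
  push_cast
  ring

lemma two_div_pi_mul_abs_le_norm_exp_I_mul_ofReal_sub_one {x : ℝ} (hx : |x| ≤ π) :
    2 / π * |x| ≤ ‖exp (I * x) - 1‖ := by
  have habs : |x / 2| = |x| / 2 := by rw [abs_div, abs_two]
  rw [Complex.norm_exp_I_mul_ofReal_sub_one, norm_mul, Real.norm_eq_abs, Real.norm_eq_abs, abs_two,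
    abs_sin_eq_sin_abs_of_abs_le_pi (by linarith [pi_pos]), habs]
  linarith [mul_le_sin (x := |x| / 2) (by positivity) (by linarith)]

lemma one_le_norm_fourier_coe_sub_one {T : ℝ} (hT : 0 < T) {n : ℤ} {x : ℝ}
    (h₁ : T / 4 ≤ |n * x|) (h₂ : |n * x| ≤ T / 2) : 1 ≤ ‖fourier n (x : AddCircle T) - 1‖ := by
  have hexp : fourier n (x : AddCircle T) = exp (I * ↑(2 * π * (n * x) / T)) := by
    rw [fourier_coe_apply]; push_cast; ring_nf
  have hθ : |2 * π * (n * x) / T| = 2 * π * |n * x| / T := by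
    rw [abs_div, abs_mul, abs_of_pos two_pi_pos, abs_of_pos hT]
  have hθπ : |2 * π * (n * x) / T| ≤ π := by
    rw [hθ, div_le_iff₀ hT]; nlinarith [pi_pos]
  calc (1 : ℝ) ≤ 2 / π * |2 * π * (n * x) / T| := by
        rw [hθ, div_mul_div_comm, le_div_iff₀ (by positivity)]; nlinarith [pi_pos]
    _ ≤ ‖fourier n (x : AddCircle T) - 1‖ :=
        hexp ▸ two_div_pi_mul_abs_le_norm_exp_I_mul_ofReal_sub_one hθπ

lemma sqrt_two_div_two_rpow_lt_one {s : ℝ} (hs : 1 / 2 < s) : √2 / 2 ^ s < 1 := by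
  rw [div_lt_one (by positivity), sqrt_eq_rpow]
  exact rpow_lt_rpow_of_exponent_lt one_lt_two hs

section fourierCoeffOn

variable {a b : ℝ} (hab : a < b)

lemma fourierCoeffOn_sub {f g : ℝ → ℂ} (hf : IntervalIntegrable f volume a b)
    (hg : IntervalIntegrable g volume a b) (n : ℤ) :
    fourierCoeffOn hab (f - g) n = fourierCoeffOn hab f n - fourierCoeffOn hab g n := by
  have hchar : ContinuousOn (fun x : ℝ => fourier (-n) (x : AddCircle (b - a))) (Set.uIcc a b) :=
    ((map_continuous (fourier (-n))).comp (AddCircle.continuous_mk' _)).continuousOn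
  rw [fourierCoeffOn_eq_integral, fourierCoeffOn_eq_integral, fourierCoeffOn_eq_integral,
    ← smul_sub,
    ← intervalIntegral.integral_sub (hf.continuousOn_smul hchar) (hg.continuousOn_smul hchar)]
  simp only [Pi.sub_apply, smul_sub]

lemma fourierCoeffOn_comp_sub_right {f : ℝ → ℂ} (hf : Periodic f (b - a)) (h : ℝ) (n : ℤ) :
    fourierCoeffOn hab (fun x => f (x - h)) n =
      fourier (-n) (h : AddCircle (b - a)) * fourierCoeffOn hab f n := by
  set φ : ℝ → ℂ := fun x => fourier (-n) (x : AddCircle (b - a)) * f x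
  have hφ : Periodic φ (b - a) := fun x => by simp only [φ, AddCircle.coe_add_period, hf x]
  have hshift (x : ℝ) : fourier (-n) (x : AddCircle (b - a)) * f (x - h) =
      fourier (-n) (h : AddCircle (b - a)) * φ (x - h) := by
    simp only [φ, fourier_coe_apply, ← mul_assoc, ← Complex.exp_add]
    congr 2
    push_cast
    ring
  simp only [fourierCoeffOn_eq_integral, smul_eq_mul, hshift, intervalIntegral.integral_const_mul,
    intervalIntegral.integral_comp_sub_right φ h]
  rw [show b - h = a - h + (b - a) by ring, hφ.intervalIntegral_add_eq (a - h) a, add_sub_cancel,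
    mul_smul_comm]

lemma sum_norm_fourierCoeffOn_le {f : ℝ → ℂ}
    (hf : AEStronglyMeasurable f (volume.restrict (Set.Ioc a b))) {M : ℝ} (hM : ∀ x, ‖f x‖ ≤ M)
    (S : Finset ℤ) : ∑ n ∈ S, ‖fourierCoeffOn hab f n‖ ≤ √(#S : ℝ) * M := by
  have hM₀ : 0 ≤ M := (norm_nonneg _).trans (hM 0)
  have hL2 : MemLp f 2 (volume.restrict (Set.Ioc a b)) := .of_bound hf M (ae_of_all _ hM)
  have hbessel : ∑ n ∈ S, ‖fourierCoeffOn hab f n‖ ^ 2 ≤ M ^ 2 := by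
    refine (sum_le_hasSum S (fun _ _ => by positivity) (hasSum_sq_fourierCoeffOn hab hL2)).trans ?_
    have hint : ‖∫ x in a..b, ‖f x‖ ^ 2‖ ≤ M ^ 2 * |b - a| :=
      intervalIntegral.norm_integral_le_of_norm_le_const fun x _ => by
        simpa using pow_le_pow_left₀ (norm_nonneg _) (hM x) 2
    rw [abs_of_pos (sub_pos.2 hab)] at hint
    rw [smul_eq_mul, inv_mul_le_iff₀ (sub_pos.2 hab)]
    linarith [le_norm_self (∫ x in a..b, ‖f x‖ ^ 2)]
  have hcs : (∑ n ∈ S, ‖fourierCoeffOn hab f n‖) ^ 2 ≤ #S * M ^ 2 :=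
    sq_sum_le_card_mul_sum_sq.trans (by gcongr)
  calc ∑ n ∈ S, ‖fourierCoeffOn hab f n‖ ≤ √(#S * M ^ 2) :=
        (le_abs_self _).trans (abs_le_sqrt hcs)
    _ = √(#S : ℝ) * M := by rw [sqrt_mul (Nat.cast_nonneg _), sqrt_sq hM₀]

lemma sum_dyadicShell_norm_fourierCoeffOn_le {f : ℝ → ℂ} (hf : Continuous f)
    (hper : Periodic f (b - a)) {B s : ℝ} (hB : ∀ x y, ‖f (x - y) - f x‖ ≤ B * |y| ^ s) (k : ℕ) :
    ∑ n ∈ dyadicShell k, ‖fourierCoeffOn hab f n‖ ≤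
      √2 * ((b - a) / 4) ^ s * B * (√2 / 2 ^ s) ^ k := by
  have hT : 0 < b - a := sub_pos.2 hab
  -- with this `h`, `(b - a) / 4 ≤ |n h| ≤ (b - a) / 2` on the `k`-th shell
  obtain ⟨h, hh, hT_eq⟩ : ∃ h : ℝ, 0 < h ∧ b - a = h * 2 ^ k * 4 :=
    ⟨(b - a) / (2 ^ k * 4), by positivity, by field_simp⟩
  have hcoef (n : ℤ) : fourierCoeffOn hab (fun x => f (x - h) - f x) n =
      (fourier (-n) (h : AddCircle (b - a)) - 1) * fourierCoeffOn hab f n := by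
    have hshift : IntervalIntegrable (fun x => f (x - h)) volume a b :=
      (hf.comp (continuous_sub_right h)).intervalIntegrable _ _
    rw [show (fun x => f (x - h) - f x) = (fun x => f (x - h)) - f from rfl,
      fourierCoeffOn_sub hab hshift (hf.intervalIntegrable _ _),
      fourierCoeffOn_comp_sub_right hab hper]
    ring
  have hmult : ∀ n ∈ dyadicShell k, 1 ≤ ‖fourier (-n) (h : AddCircle (b - a)) - 1‖ := by
    intro n hn
    rw [mem_dyadicShell] at hn
    have h₁ : (2 : ℝ) ^ k ≤ |(n : ℝ)| := by exact_mod_cast hn.1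
    have h₂ : |(n : ℝ)| ≤ 2 ^ k * 2 := by exact_mod_cast pow_succ (2 : ℤ) k ▸ hn.2.le
    have habs : |((-n : ℤ) : ℝ) * h| = |(n : ℝ)| * h := by
      rw [Int.cast_neg, neg_mul, abs_neg, abs_mul, abs_of_pos hh]
    apply one_le_norm_fourier_coe_sub_one hT <;> rw [habs, hT_eq] <;> nlinarith
  calc ∑ n ∈ dyadicShell k, ‖fourierCoeffOn hab f n‖
      ≤ ∑ n ∈ dyadicShell k, ‖fourierCoeffOn hab (fun x => f (x - h) - f x) n‖ :=
        sum_le_sum fun n hn => by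
          rw [hcoef, norm_mul]; exact le_mul_of_one_le_left (norm_nonneg _) (hmult n hn)
    _ ≤ √(#(dyadicShell k) : ℝ) * (B * h ^ s) :=
        sum_norm_fourierCoeffOn_le hab
          ((hf.comp (continuous_sub_right h)).sub hf).aestronglyMeasurable
          (fun x => by simpa [abs_of_pos hh] using hB x h) _
    _ = √2 * ((b - a) / 4) ^ s * B * (√2 / 2 ^ s) ^ k := by
      have hsqrt : √((2 : ℝ) ^ (k + 1)) = √2 * √2 ^ k := by
        rw [sqrt_eq_iff_eq_sq (by positivity) (by positivity), mul_pow, ← pow_mul, mul_comm k,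
          pow_mul, sq_sqrt zero_le_two, pow_succ']
      rw [card_dyadicShell, Nat.cast_pow, Nat.cast_ofNat, hsqrt, hT_eq,
        mul_div_cancel_right₀ _ four_ne_zero, mul_rpow hh.le (by positivity),
        ← rpow_pow_comm zero_le_two, div_pow]
      field_simp

theorem tsum_norm_fourierCoeffOn_le {f : ℝ → ℂ} (hf : Continuous f) (hper : Periodic f (b - a))
    {A B s : ℝ} (hs : 1 / 2 < s) (hA : ∀ x, ‖f x‖ ≤ A)
    (hB : ∀ x y, ‖f (x - y) - f x‖ ≤ B * |y| ^ s) :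
    ∑' n, ‖fourierCoeffOn hab f n‖ ≤ A + √2 * ((b - a) / 4) ^ s / (1 - √2 / 2 ^ s) * B := by
  have hB₀ : 0 ≤ B := by simpa using (norm_nonneg _).trans (hB 0 1)
  have hr := sqrt_two_div_two_rpow_lt_one hs
  have hcoef₀ : ‖fourierCoeffOn hab f 0‖ ≤ A := by
    simpa using sum_norm_fourierCoeffOn_le hab hf.aestronglyMeasurable hA {0}
  refine (tsum_le_of_sum_dyadicShell_le (fun n => norm_nonneg _) (by positivity) (by positivity) hr
    (sum_dyadicShell_norm_fourierCoeffOn_le hab hf hper hB)).trans ?_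
  rw [div_mul_eq_mul_div]
  linarith

end fourierCoeffOn

theorem bernstein_theorem_general (s : ℝ) (hs0 : 1/2 < s) :
    ∃ C : ℝ, ∀ f : ℝ → ℂ, Continuous f → (∀ x, f (x + 2 * Real.pi) = f x) →
      ∀ A B : ℝ, (∀ x, ‖f x‖ ≤ A) →
      (∀ x y : ℝ, ‖f (x - y) - f x‖ ≤ B * |y| ^ s) →
      ∑' ξ : ℤ, ‖fourierCoef f ξ‖ ≤ C * (A + B) := by
  set K := √2 * (π / 2) ^ s / (1 - √2 / 2 ^ s)
  have hK : 0 ≤ K :=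
    div_nonneg (by positivity) (sub_nonneg.2 (sqrt_two_div_two_rpow_lt_one hs0).le)
  refine ⟨1 + K, fun f hf hper A B hA hB => ?_⟩
  have hA₀ : 0 ≤ A := (norm_nonneg _).trans (hA 0)
  have hB₀ : 0 ≤ B := by simpa using (norm_nonneg _).trans (hB 0 1)
  have hper' : Periodic f (2 * π - 0) := by rwa [sub_zero]
  calc ∑' ξ : ℤ, ‖fourierCoef f ξ‖ = ∑' ξ : ℤ, ‖fourierCoeffOn two_pi_pos f ξ‖ := by
        simp_rw [fourierCoef_eq_fourierCoeffOn]
    _ ≤ A + K * B := by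
        convert tsum_norm_fourierCoeffOn_le two_pi_pos hf hper' hs0 hA hB using 6
        ring
    _ ≤ (1 + K) * (A + B) := by nlinarith [mul_nonneg hK hA₀]

/-- Bernstein's theorem on the circle. -/
theorem bernstein_theorem (s : ℝ) (hs0 : 1/2 < s) (hs1 : s ≤ 1) :
    ∃ C : ℝ, ∀ f : ℝ → ℂ, Continuous f → (∀ x, f (x + 2 * Real.pi) = f x) →
      ∀ A B : ℝ, (∀ x, ‖f x‖ ≤ A) →
      (∀ x y : ℝ, ‖f (x - y) - f x‖ ≤ B * |y| ^ s) →
      ∑' ξ : ℤ, ‖fourierCoef f ξ‖ ≤ C * (A + B) :=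
  bernstein_theorem_general s hs0
end

section
/- Let 2/3 < p ≤ 2, s_p = 1/p - 1/2, 0 < r < 1, s_p < s < 1, let q be the conjugate exponent of p (1/p + 1/q = 1), and suppose r + 1/q ≤ ρ ≤ 1. If σ : ℤ → ℂ satisfies |σ(ξ)| ≤ C·⟨ξ⟩^{-ρ} where ⟨ξ⟩ = (1+|ξ|²)^{1/2}, then there is a constant C' such that for every 2π-periodic Hölder continuous f of order s: sup_{m∈ℕ} 2^{mr} · sup_x |∑_{2^m ≤ |ξ| < 2^{m+1}} σ(ξ)f̂(ξ)e^{ixξ}| ≤ C' ‖f‖_{Λ^s}. -/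
noncomputable def dyadicBlock (m : ℕ) : Finset ℤ :=
  (Finset.Icc (-(2^(m+1) : ℤ)) (2^(m+1))).filter fun ξ => 2^m ≤ |ξ| ∧ |ξ| < 2^(m+1)

/-!
On the `m`-th dyadic block the symbol is `O(2^{-mρ})`, and Cauchy–Schwarz over the `O(2^m)`
frequencies of the block leaves the `ℓ²` mass of `f̂` there. For `h = π / 2^{m+1}` the factor
`|e^{-iξh} - 1|²` is at least `2` on the block, so Parseval for `f(· - h) - f`, whose sup norm is
at most `B hˢ`, bounds that mass by `B² h^{2s} / 2`. The block is therefore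
`O(C B 2^{m(1/2 - ρ - s)})`, and `r + 1/2 ≤ ρ + s` because `1/p + 1/q = 1`, `1/p - 1/2 < s` and
`r + 1/q ≤ ρ`.
-/

open MeasureTheory Real Complex

lemma rpow_le_rpow_abs_mul_rpow_of_le_of_le_mul {a c y : ℝ} (ha : 0 < a) (hay : a ≤ y)
    (hyc : y ≤ c * a) (t : ℝ) :
    y ^ t ≤ c ^ |t| * a ^ t := by
  have hya : 1 ≤ y / a := (one_le_div ha).mpr hay
  calc y ^ t = (y / a) ^ t * a ^ t := by
        rw [← Real.mul_rpow (by positivity) ha.le, div_mul_cancel₀ _ ha.ne']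
    _ ≤ (y / a) ^ |t| * a ^ t := by
        gcongr ?_ * _; exact Real.rpow_le_rpow_of_exponent_le hya (le_abs_self t)
    _ ≤ c ^ |t| * a ^ t := by gcongr; rwa [div_le_iff₀ ha]

lemma two_le_norm_exp_I_mul_sub_one_sq {θ : ℝ} (hθ : |θ| ∈ Set.Icc (π / 2) π) :
    2 ≤ ‖exp (I * θ) - 1‖ ^ 2 := by
  obtain ⟨h₁, h₂⟩ := hθ
  have hcos : Real.cos θ ≤ 0 := by
    rw [← Real.cos_abs]
    exact Real.cos_nonpos_of_pi_div_two_le_of_le h₁ (by linarith [pi_pos])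
  have hsin : Real.sin (θ / 2) ^ 2 = 1 / 2 - Real.cos θ / 2 := by
    rw [Real.sin_sq, Real.cos_sq, mul_div_cancel₀ _ two_ne_zero]; ring
  rw [norm_exp_I_mul_ofReal_sub_one]
  simp only [norm_mul, mul_pow, Real.norm_eq_abs, sq_abs, hsin]
  linarith

lemma fourierCoeffOn_eq_fourierCoef (f : ℝ → ℂ) (ξ : ℤ) :
    fourierCoeffOn two_pi_pos f ξ = fourierCoef f ξ := by
  rw [fourierCoeffOn_eq_integral, fourierCoef, sub_zero, real_smul]
  congr 1
  · push_cast; ring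
  refine intervalIntegral.integral_congr fun x _ => ?_
  rw [fourier_coe_apply, smul_eq_mul, mul_comm]
  congr 2
  push_cast
  field_simp

lemma sum_sq_norm_fourierCoef_le {f : ℝ → ℂ} (hf : AEStronglyMeasurable f) {M : ℝ}
    (hM : ∀ x, ‖f x‖ ≤ M) (S : Finset ℤ) :
    ∑ ξ ∈ S, ‖fourierCoef f ξ‖ ^ 2 ≤ M ^ 2 := by
  have hL2 : MemLp f 2 (volume.restrict (Set.Ioc 0 (2 * π))) :=
    .of_bound hf.restrict M (ae_of_all _ hM)
  have hint : ∫ x in (0:ℝ)..2 * π, ‖f x‖ ^ 2 ≤ 2 * π * M ^ 2 := by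
    have : ‖∫ x in (0:ℝ)..2 * π, ‖f x‖ ^ 2‖ ≤ M ^ 2 * |2 * π - 0| :=
      intervalIntegral.norm_integral_le_of_norm_le_const fun x _ => by
        simpa using pow_le_pow_left₀ (norm_nonneg _) (hM x) 2
    rw [sub_zero, abs_of_pos two_pi_pos, mul_comm (M ^ 2)] at this
    exact (Real.le_norm_self _).trans this
  have hParseval := hasSum_sq_fourierCoeffOn two_pi_pos hL2
  simp only [fourierCoeffOn_eq_fourierCoef, sub_zero, smul_eq_mul] at hParseval
  calc ∑ ξ ∈ S, ‖fourierCoef f ξ‖ ^ 2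
      ≤ (2 * π)⁻¹ * ∫ x in (0:ℝ)..2 * π, ‖f x‖ ^ 2 :=
        sum_le_hasSum S (fun _ _ => by positivity) hParseval
    _ ≤ M ^ 2 := by
        rw [inv_mul_le_iff₀ two_pi_pos]; exact hint

lemma fourierCoef_sub {f g : ℝ → ℂ} (hf : Continuous f) (hg : Continuous g) (ξ : ℤ) :
    fourierCoef (fun x => f x - g x) ξ = fourierCoef f ξ - fourierCoef g ξ := by
  simp only [fourierCoef, sub_mul]
  rw [intervalIntegral.integral_sub, mul_sub] <;>
    exact Continuous.intervalIntegrable (by fun_prop) _ _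

lemma fourierCoef_comp_sub {f : ℝ → ℂ} (hper : Function.Periodic f (2 * π)) (h : ℝ)
    (ξ : ℤ) :
    fourierCoef (fun x => f (x - h)) ξ = exp (-(I * ξ * h)) * fourierCoef f ξ := by
  set Φ : ℝ → ℂ := fun u => f u * exp (-(I * ξ * u))
  have hΦ : Function.Periodic Φ (2 * π) := fun u => by
    have : -(I * ξ * ↑(u + 2 * π)) = -(I * ξ * u) + (-ξ : ℤ) * (2 * π * I) := by
      push_cast; ring
    simp only [Φ, hper u, this, Complex.exp_add, exp_int_mul_two_pi_mul_I, mul_one]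
  have hshift : ∫ x in (0:ℝ)..2 * π, Φ (x - h) = ∫ x in (0:ℝ)..2 * π, Φ x := by
    rw [intervalIntegral.integral_comp_sub_right, zero_sub, sub_eq_neg_add,
      hΦ.intervalIntegral_add_eq (-h) 0, zero_add]
  have hintegrand :
      ∀ x : ℝ, f (x - h) * exp (-(I * ξ * x)) = exp (-(I * ξ * h)) * Φ (x - h) := fun x => by
    simp only [Φ, mul_left_comm _ (f _), ← Complex.exp_add]
    push_cast; ring_nf
  simp only [fourierCoef, hintegrand, intervalIntegral.integral_const_mul, hshift]
  ring

lemma mem_dyadicBlock {m : ℕ} {ξ : ℤ} :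
    ξ ∈ dyadicBlock m ↔ 2 ^ m ≤ |ξ| ∧ |ξ| < 2 ^ (m + 1) := by
  simp only [dyadicBlock, Finset.mem_filter, Finset.mem_Icc, and_iff_right_iff_imp]
  exact fun h => abs_le.mp h.2.le

lemma card_dyadicBlock_le (m : ℕ) : (dyadicBlock m).card ≤ 2 ^ (m + 2) := by
  have hsub : dyadicBlock m ⊆ Finset.Ioo (-(2 ^ (m + 1) : ℤ)) (2 ^ (m + 1)) := fun ξ hξ =>
    Finset.mem_Ioo.mpr (abs_lt.mp (mem_dyadicBlock.mp hξ).2)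
  refine (Finset.card_le_card hsub).trans ?_
  rw [Int.card_Ioo, Int.toNat_le]
  push_cast
  linarith [show (2:ℤ) ^ (m + 2) = 2 * 2 ^ (m + 1) by ring]

lemma abs_mul_mem_Icc_of_mem_dyadicBlock {m : ℕ} {ξ : ℤ} (hξ : ξ ∈ dyadicBlock m) :
    |ξ * (π / 2 ^ (m + 1))| ∈ Set.Icc (π / 2) π := by
  obtain ⟨hlow, hhigh⟩ := mem_dyadicBlock.mp hξ
  have hlow' : (2:ℝ) ^ m ≤ |(ξ:ℝ)| := by exact_mod_cast hlow
  have hhigh' : |(ξ:ℝ)| ≤ 2 ^ (m + 1) := by exact_mod_cast hhigh.le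
  rw [Set.mem_Icc, abs_mul, abs_of_pos (show 0 < π / 2 ^ (m + 1) by positivity), mul_div_assoc',
    le_div_iff₀ (by positivity), div_le_iff₀ (by positivity), pow_succ]
  rw [pow_succ] at hhigh'
  constructor <;> nlinarith [pi_pos]

lemma japaneseBracket_mem_Icc_of_mem_dyadicBlock {m : ℕ} {ξ : ℤ} (hξ : ξ ∈ dyadicBlock m) :
    (1 + (ξ:ℝ) ^ 2) ^ ((1:ℝ) / 2) ∈ Set.Icc ((2:ℝ) ^ m) (4 * 2 ^ m) := by
  obtain ⟨hlow, hhigh⟩ := mem_dyadicBlock.mp hξ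
  have hlow' : (2:ℝ) ^ m ≤ |(ξ:ℝ)| := by exact_mod_cast hlow
  have hhigh' : |(ξ:ℝ)| ≤ 2 * 2 ^ m := by rw [← pow_succ']; exact_mod_cast hhigh.le
  have hsq_low := pow_le_pow_left₀ (by positivity) hlow' 2
  have hsq_high := pow_le_pow_left₀ (abs_nonneg _) hhigh' 2
  have hone : (1:ℝ) ≤ 2 ^ m := one_le_pow₀ one_le_two
  rw [sq_abs] at hsq_low hsq_high
  rw [Set.mem_Icc, ← Real.sqrt_eq_rpow, Real.le_sqrt (by positivity) (by positivity),
    Real.sqrt_le_left (by positivity)]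
  constructor <;> nlinarith

lemma sum_sq_norm_fourierCoef_dyadicBlock_le {f : ℝ → ℂ} (hf : Continuous f)
    (hper : Function.Periodic f (2 * π)) {m : ℕ} {M : ℝ}
    (hM : ∀ x, ‖f (x - π / 2 ^ (m + 1)) - f x‖ ≤ M) :
    ∑ ξ ∈ dyadicBlock m, ‖fourierCoef f ξ‖ ^ 2 ≤ M ^ 2 / 2 := by
  set h := π / 2 ^ (m + 1)
  have hg : Continuous fun x => f (x - h) - f x := by fun_prop
  have hterm : ∀ ξ ∈ dyadicBlock m,
      2 * ‖fourierCoef f ξ‖ ^ 2 ≤ ‖fourierCoef (fun x => f (x - h) - f x) ξ‖ ^ 2 := by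
    intro ξ hξ
    have hθ : -(I * ξ * h) = I * ((-(ξ * h) : ℝ) : ℂ) := by push_cast; ring
    rw [fourierCoef_sub (f := fun x => f (x - h)) (by fun_prop) hf, fourierCoef_comp_sub hper,
      ← sub_one_mul, norm_mul, mul_pow, hθ]
    gcongr
    exact two_le_norm_exp_I_mul_sub_one_sq
      (by rw [abs_neg]; exact abs_mul_mem_Icc_of_mem_dyadicBlock hξ)
  have hParseval :=
    (Finset.sum_le_sum hterm).trans (sum_sq_norm_fourierCoef_le hg.aestronglyMeasurable hM _)
  rw [← Finset.mul_sum] at hParseval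
  linarith

lemma norm_sum_dyadicBlock_le {σ : ℤ → ℂ} {f : ℝ → ℂ} (hf : Continuous f)
    (hper : Function.Periodic f (2 * π)) {m : ℕ} {a M : ℝ} (ha : 0 ≤ a)
    (hσ : ∀ ξ ∈ dyadicBlock m, ‖σ ξ‖ ≤ a)
    (hM : ∀ x, ‖f (x - π / 2 ^ (m + 1)) - f x‖ ≤ M) (x : ℝ) :
    ‖∑ ξ ∈ dyadicBlock m, σ ξ * fourierCoef f ξ * exp (I * x * ξ)‖ ≤
      a * (√(2 ^ (m + 1)) * M) := by
  have hM0 : 0 ≤ M := (norm_nonneg _).trans (hM 0)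
  have hCS : (∑ ξ ∈ dyadicBlock m, ‖fourierCoef f ξ‖) ^ 2 ≤ 2 ^ (m + 1) * M ^ 2 :=
    calc (∑ ξ ∈ dyadicBlock m, ‖fourierCoef f ξ‖) ^ 2
        ≤ (dyadicBlock m).card * ∑ ξ ∈ dyadicBlock m, ‖fourierCoef f ξ‖ ^ 2 :=
          sq_sum_le_card_mul_sum_sq
      _ ≤ 2 ^ (m + 2) * (M ^ 2 / 2) := by
          gcongr
          · exact_mod_cast card_dyadicBlock_le m
          · exact sum_sq_norm_fourierCoef_dyadicBlock_le hf hper hM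
      _ = 2 ^ (m + 1) * M ^ 2 := by ring
  have hsum : ∑ ξ ∈ dyadicBlock m, ‖fourierCoef f ξ‖ ≤ √(2 ^ (m + 1)) * M := by
    rw [← Real.sqrt_sq hM0, ← Real.sqrt_mul (by positivity)]
    exact (le_abs_self _).trans (Real.abs_le_sqrt hCS)
  calc ‖∑ ξ ∈ dyadicBlock m, σ ξ * fourierCoef f ξ * exp (I * x * ξ)‖
      ≤ ∑ ξ ∈ dyadicBlock m, ‖σ ξ‖ * ‖fourierCoef f ξ‖ := by
        refine (norm_sum_le _ _).trans_eq (Finset.sum_congr rfl fun ξ _ => ?_)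
        rw [norm_mul, norm_mul, show I * x * ξ = ((x * ξ : ℝ) : ℂ) * I by push_cast; ring,
          norm_exp_ofReal_mul_I, mul_one]
    _ ≤ ∑ ξ ∈ dyadicBlock m, a * ‖fourierCoef f ξ‖ := by
        gcongr with ξ hξ; exact hσ ξ hξ
    _ ≤ a * (√(2 ^ (m + 1)) * M) := by
        rw [← Finset.mul_sum]; gcongr

theorem holder_to_holder_multiplier_general (p q s r ρ C : ℝ)
    (hq : 1/p + 1/q = 1) (hs0 : 1/p - 1/2 < s) (hρ : r + 1/q ≤ ρ)
    (σ : ℤ → ℂ)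
    (hσ : ∀ ξ : ℤ, ‖σ ξ‖ ≤ C * ((1 + (ξ:ℝ)^2) ^ ((1:ℝ)/2)) ^ (-ρ)) :
    ∃ C' : ℝ, ∀ f : ℝ → ℂ, Continuous f → (∀ x, f (x + 2 * Real.pi) = f x) →
      ∀ A B : ℝ, (∀ x, ‖f x‖ ≤ A) →
      (∀ x y : ℝ, ‖f (x - y) - f x‖ ≤ B * |y| ^ s) →
      ∀ m : ℕ, ∀ x ∈ Set.Ico (0:ℝ) (2 * Real.pi),
        (2:ℝ) ^ ((m:ℝ) * r) *
          ‖∑ ξ ∈ dyadicBlock m,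
            σ ξ * fourierCoef f ξ * Complex.exp (Complex.I * (x:ℂ) * (ξ:ℂ))‖
        ≤ C' * (A + B) := by
  have hC : 0 ≤ C := by simpa using (norm_nonneg _).trans (hσ 0)
  have hexp : r + 1 / 2 + -ρ + -s ≤ 0 := by linarith
  refine ⟨C * 4 ^ |ρ| * (√2 * (π / 2) ^ s), fun f hf hper A B hA hB m x _ => ?_⟩
  have hA0 : 0 ≤ A := (norm_nonneg _).trans (hA 0)
  have hB0 : 0 ≤ B := by simpa using (norm_nonneg _).trans (hB 0 1)
  set t : ℝ := 2 ^ m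
  have ht : 1 ≤ t := one_le_pow₀ one_le_two
  have hsymbol : ∀ ξ ∈ dyadicBlock m, ‖σ ξ‖ ≤ C * 4 ^ |ρ| * t ^ (-ρ) := by
    intro ξ hξ
    obtain ⟨h₁, h₂⟩ := japaneseBracket_mem_Icc_of_mem_dyadicBlock hξ
    rw [mul_assoc, ← abs_neg ρ]
    refine (hσ ξ).trans ?_
    gcongr
    exact rpow_le_rpow_abs_mul_rpow_of_le_of_le_mul (by positivity) h₁ h₂ _
  have hmod : ∀ y, ‖f (y - π / 2 ^ (m + 1)) - f y‖ ≤ B * (π / 2) ^ s * t ^ (-s) := by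
    intro y
    rw [pow_succ', ← div_div, div_eq_mul_inv _ t]
    have := hB y (π / 2 * t⁻¹)
    rwa [abs_of_pos (by positivity), Real.mul_rpow (by positivity) (by positivity),
      Real.inv_rpow (by positivity), ← Real.rpow_neg (by positivity), ← mul_assoc] at this
  have hblock := norm_sum_dyadicBlock_le hf hper (by positivity) hsymbol hmod x
  rw [Real.rpow_mul two_pos.le, Real.rpow_natCast]
  calc t ^ r * ‖∑ ξ ∈ dyadicBlock m, σ ξ * fourierCoef f ξ * exp (I * x * ξ)‖
      ≤ t ^ r * (C * 4 ^ |ρ| * t ^ (-ρ) * (√(2 ^ (m + 1)) * (B * (π / 2) ^ s * t ^ (-s)))) :=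
        by gcongr
    _ = C * 4 ^ |ρ| * (√2 * (π / 2) ^ s) * B * t ^ (r + 1 / 2 + -ρ + -s) := by
        rw [pow_succ', Real.sqrt_mul zero_le_two, Real.sqrt_eq_rpow t,
          Real.rpow_add (by positivity), Real.rpow_add (by positivity),
          Real.rpow_add (by positivity)]
        ring
    _ ≤ C * 4 ^ |ρ| * (√2 * (π / 2) ^ s) * B :=
        mul_le_of_le_one_right (by positivity) (Real.rpow_le_one_of_one_le_of_nonpos ht hexp)
    _ ≤ C * 4 ^ |ρ| * (√2 * (π / 2) ^ s) * (A + B) := by gcongr; linarith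

theorem holder_to_holder_multiplier (p q s r ρ C : ℝ)
    (hp0 : 2/3 < p) (hp1 : p ≤ 2) (hq : 1/p + 1/q = 1)
    (hr0 : 0 < r) (hr1 : r < 1) (hs0 : 1/p - 1/2 < s) (hs1 : s < 1)
    (hρ : r + 1/q ≤ ρ) (hρ1 : ρ ≤ 1)
    (σ : ℤ → ℂ)
    (hσ : ∀ ξ : ℤ, ‖σ ξ‖ ≤ C * ((1 + (ξ:ℝ)^2) ^ ((1:ℝ)/2)) ^ (-ρ)) :
    ∃ C' : ℝ, ∀ f : ℝ → ℂ, Continuous f → (∀ x, f (x + 2 * Real.pi) = f x) →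
      ∀ A B : ℝ, (∀ x, ‖f x‖ ≤ A) →
      (∀ x y : ℝ, ‖f (x - y) - f x‖ ≤ B * |y| ^ s) →
      ∀ m : ℕ, ∀ x ∈ Set.Ico (0:ℝ) (2 * Real.pi),
        (2:ℝ) ^ ((m:ℝ) * r) *
          ‖∑ ξ ∈ dyadicBlock m,
            σ ξ * fourierCoef f ξ * Complex.exp (Complex.I * (x:ℂ) * (ξ:ℂ))‖
        ≤ C' * (A + B) :=
  holder_to_holder_multiplier_general p q s r ρ C hq hs0 hρ σ hσ
end
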